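/- For every graph G on n vertices, α₁(G) ≤ n·b(G)/4. -/

import Mathlib

open SimpleGraph Finset

variable {V : Type*} [Fintype V] [DecidableEq V]

/-- `A` is a triangle-independent edge set of `G`: a set of edges of `G`
containing at most one edge from each triangle of `G`. -/
def IsTriangleIndep (G : SimpleGraph V) (A : Finset (Sym2 V)) : Prop :=
  (A : Set (Sym2 V)) ⊆ G.edgeSet ∧
    ∀ a b c : V, G.Adj a b → G.Adj b c → G.Adj a c →
      ({s(a, b), s(b, c), s(a, c)} ∩ A).card ≤ 1

/-- `α₁(G)`: the maximum size of a triangle-independent set in `G`. -/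
noncomputable def alphaOne (G : SimpleGraph V) : ℕ :=
  sSup {k | ∃ A : Finset (Sym2 V), IsTriangleIndep G A ∧ A.card = k}

/-- `τ_B(G)`: the minimum size of an edge set of `G` whose deletion makes `G` bipartite. -/
noncomputable def tauB (G : SimpleGraph V) : ℕ :=
  sInf {k | ∃ D : Finset (Sym2 V), (D : Set (Sym2 V)) ⊆ G.edgeSet ∧
    (G.deleteEdges (D : Set (Sym2 V))).Colorable 2 ∧ D.card = k}

/-- `b(G)`: the maximum size of a vertex set inducing a bipartite subgraph of `G`. -/
noncomputable def bipNum (G : SimpleGraph V) : ℕ :=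
  sSup {k | ∃ B : Finset V, (G.induce (B : Set V)).Colorable 2 ∧ B.card = k}

/-!
Let `A` be a maximum triangle-independent set and `H` the graph with edge set `A`. For an edge
`uv` of `H`, the `H`-neighbourhoods of `u` and `v` are disjoint and independent in `G`, since two
edges of `A` at a common vertex cannot close a triangle of `G`. Their union therefore induces a
bipartite subgraph, so `d(u) + d(v) ≤ b(G)` for every edge of `H`. Summing over the edges gives
`∑ d(v)² ≤ |A| b(G)`, and Cauchy–Schwarz `(2|A|)² = (∑ d(v))² ≤ n ∑ d(v)²` yields `4|A| ≤ n b(G)`.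
-/

namespace SimpleGraph

theorem sum_dart_fst (G : SimpleGraph V) [DecidableRel G.Adj] {M : Type*} [AddCommMonoid M]
    (f : V → M) : ∑ d : G.Dart, f d.fst = ∑ v, G.degree v • f v := by
  rw [← Finset.sum_fiberwise univ (fun d : G.Dart => d.fst)]
  refine sum_congr rfl fun v _ => ?_
  rw [sum_congr rfl fun d hd => by rw [(mem_filter.1 hd).2], sum_const,
    dart_fst_fiber_card_eq_degree]

theorem two_mul_sum_degree_sq (G : SimpleGraph V) [DecidableRel G.Adj] :
    2 * ∑ v, G.degree v ^ 2 = ∑ d : G.Dart, (G.degree d.fst + G.degree d.snd) := by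
  have hsnd : ∑ d : G.Dart, G.degree d.snd = ∑ d : G.Dart, G.degree d.fst :=
    Fintype.sum_equiv (Dart.symm_involutive.toPerm _) _ _ fun _ => rfl
  rw [sum_add_distrib, hsnd, ← two_mul, sum_dart_fst G fun v => G.degree v]
  simp only [smul_eq_mul, sq, two_mul]

theorem four_mul_card_edgeFinset_le (G : SimpleGraph V) [DecidableRel G.Adj] {b : ℕ}
    (h : ∀ u v, G.Adj u v → G.degree u + G.degree v ≤ b) :
    4 * #G.edgeFinset ≤ Fintype.card V * b := by
  set m := #G.edgeFinset
  have hsq : 2 * ∑ v, G.degree v ^ 2 ≤ 2 * (m * b) := by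
    calc 2 * ∑ v, G.degree v ^ 2 = ∑ d : G.Dart, (G.degree d.fst + G.degree d.snd) :=
          two_mul_sum_degree_sq G
      _ ≤ ∑ _d : G.Dart, b := sum_le_sum fun d _ => h _ _ d.adj
      _ = 2 * (m * b) := by
          rw [sum_const, card_univ, dart_card_eq_twice_card_edges, smul_eq_mul, mul_assoc]
  have hcs : (2 * m) ^ 2 ≤ Fintype.card V * ∑ v, G.degree v ^ 2 := by
    simpa [sum_degrees_eq_twice_card_edges] using
      sq_sum_le_card_mul_sum_sq (s := univ) (f := fun v => G.degree v)
  rcases Nat.eq_zero_or_pos m with hm | hm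
  · simp [hm]
  refine Nat.le_of_mul_le_mul_right ?_ hm
  calc 4 * m * m = (2 * m) ^ 2 := by ring
    _ ≤ Fintype.card V * (m * b) := hcs.trans (Nat.mul_le_mul_left _ (by omega))
    _ = Fintype.card V * b * m := by ring

theorem IsIndepSet.colorable_induce_union {α : Type*} {G : SimpleGraph α} {s t : Set α}
    (hs : G.IsIndepSet s) (ht : G.IsIndepSet t) : (G.induce (s ∪ t)).Colorable 2 := by
  classical
  refine ⟨Coloring.mk (fun x => if (x : α) ∈ s then 0 else 1) ?_⟩
  rintro ⟨x, hx⟩ ⟨y, hy⟩ hxy hcol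
  have hne : x ≠ y := G.ne_of_adj hxy
  by_cases hxs : x ∈ s <;> by_cases hys : y ∈ s
  · exact hs hxs hys hne hxy
  · simp [hxs, hys] at hcol
  · simp [hxs, hys] at hcol
  · exact ht (hx.resolve_left hxs) (hy.resolve_left hys) hne hxy

end SimpleGraph

namespace IsTriangleIndep

variable {W : Type*} [DecidableEq W] {G H : SimpleGraph W} {A : Finset (Sym2 W)}

theorem not_adj (hA : IsTriangleIndep G A) {a b c : W} (hab : s(a, b) ∈ A) (hac : s(a, c) ∈ A) :
    ¬G.Adj b c := by
  intro hbc
  have hne : s(a, b) ≠ s(a, c) := fun h => G.ne_of_adj hbc (Sym2.congr_right.1 h)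
  have htwo : 1 < #({s(a, b), s(b, c), s(a, c)} ∩ A) :=
    one_lt_card.2 ⟨_, by simp [hab], _, by simp [hac], hne⟩
  have := hA.2 a b c (hA.1 hab) hbc (hA.1 hac)
  omega

theorem edgeSet_fromEdgeSet (hA : IsTriangleIndep G A) :
    (fromEdgeSet (A : Set (Sym2 W))).edgeSet = A := by
  rw [SimpleGraph.edgeSet_fromEdgeSet, sdiff_eq_left, Set.disjoint_left]
  exact fun e he => G.not_isDiag_of_mem_edgeSet (hA.1 he)

theorem isIndepSet_neighborSet (hA : IsTriangleIndep G A) (hH : H.edgeSet = A) (u : W) :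
    G.IsIndepSet (H.neighborSet u) := by
  intro x hx y hy _
  rw [mem_neighborSet, ← mem_edgeSet, hH, mem_coe] at hx hy
  exact hA.not_adj hx hy

theorem disjoint_neighborSet (hA : IsTriangleIndep G A) (hH : H.edgeSet = A) {u v : W}
    (huv : H.Adj u v) : Disjoint (H.neighborSet u) (H.neighborSet v) := by
  refine Set.disjoint_left.2 fun w hwu hwv => ?_
  rw [mem_neighborSet, ← mem_edgeSet, hH, mem_coe, Sym2.eq_swap] at hwu hwv
  rw [← mem_edgeSet, hH, mem_coe] at huv
  exact hA.not_adj hwu hwv (hA.1 huv)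

end IsTriangleIndep

theorem card_le_bipNum {W : Type*} [Fintype W] {G : SimpleGraph W} {B : Finset W}
    (hB : (G.induce (B : Set W)).Colorable 2) : #B ≤ bipNum G :=
  le_csSup ⟨Fintype.card W, by rintro _ ⟨B', -, rfl⟩; exact B'.card_le_univ⟩ ⟨B, hB, rfl⟩

theorem exists_isTriangleIndep_card_eq_alphaOne (G : SimpleGraph V) :
    ∃ A : Finset (Sym2 V), IsTriangleIndep G A ∧ #A = alphaOne G := by
  refine Nat.sSup_mem (s := {k | ∃ A : Finset (Sym2 V), IsTriangleIndep G A ∧ #A = k})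
    ⟨0, ∅, ⟨by simp, fun _ _ _ _ _ _ => by simp⟩, rfl⟩ ?_
  exact ⟨Fintype.card (Sym2 V), by rintro _ ⟨A, -, rfl⟩; exact A.card_le_univ⟩

theorem IsTriangleIndep.degree_add_degree_le_bipNum {G H : SimpleGraph V} [DecidableRel H.Adj]
    {A : Finset (Sym2 V)} (hA : IsTriangleIndep G A) (hH : H.edgeSet = A) {u v : V}
    (huv : H.Adj u v) : H.degree u + H.degree v ≤ bipNum G := by
  have hdisj : Disjoint (H.neighborFinset u) (H.neighborFinset v) := by
    rw [← disjoint_coe, coe_neighborFinset, coe_neighborFinset]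
    exact hA.disjoint_neighborSet hH huv
  rw [← card_neighborFinset_eq_degree, ← card_neighborFinset_eq_degree,
    ← card_union_of_disjoint hdisj]
  apply card_le_bipNum
  rw [coe_union, coe_neighborFinset, coe_neighborFinset]
  exact (hA.isIndepSet_neighborSet hH u).colorable_induce_union (hA.isIndepSet_neighborSet hH v)

/-- For every graph `G` on `n` vertices, `α₁(G) ≤ n b(G) / 4`. -/
theorem alphaOne_le (G : SimpleGraph V) :
    (alphaOne G : ℝ) ≤ (Fintype.card V : ℝ) * (bipNum G : ℝ) / 4 := by
  classical
  obtain ⟨A, hA, hcard⟩ := exists_isTriangleIndep_card_eq_alphaOne G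
  set H := fromEdgeSet (A : Set (Sym2 V))
  have hH : H.edgeSet = A := hA.edgeSet_fromEdgeSet
  have hbound : 4 * #A ≤ Fintype.card V * bipNum G := by
    convert H.four_mul_card_edgeFinset_le fun _ _ huv => hA.degree_add_degree_le_bipNum hH huv
    rw [← coe_inj, coe_edgeFinset, hH]
  rw [← hcard, le_div_iff₀ four_pos]
  exact_mod_cast (by linarith : #A * 4 ≤ Fintype.card V * bipNum G)
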